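/- arXiv:2410.10765 — 2 statements merged into one kernel-verified Lean document; each statement's English description precedes it below -/
import Mathlib

section
/- For all constants $m_0 > 0$, $E > 0$, $H_0 \in \mathbb{R}$, there exist $\ell > 0$, $R > 0$, $\mu > 0$, depending only on $m_0, E, H_0$, such that every measurable function $f : \mathbb{R}^3 \to [0,\infty)$ satisfying $\int f\,dv \ge m_0$, $\int f|v|^2\,dv \le E$, and $\int f \ln f\,dv \le H_0$ has the property that the Lebesgue measure of the set $\{v \in B_R : f(v) \ge \ell\}$ is at least $\mu$. -/
/-!
The constraints leave at most a quarter of the mass in each of three regions. Chebyshev's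
inequality with the energy bound puts at most `m₀/4` outside `B_R` once `R² ≥ 4E/m₀`. The
pointwise bound `f log f ≥ -f|v|² - e^{-|v|²}` bounds the entropy of `f` on `{f < K}` from
below, so the entropy bound puts at most `m₀/4` on `{f ≥ K}` once
`log K ≥ 4 (H₀ + E + ∫ e^{-|v|²}) / m₀`. Finally `{f < ℓ} ∩ B_R` carries at most
`ℓ |B_R| ≤ m₀/4`. The remaining `m₀/4` lies on `B_R ∩ {ℓ ≤ f < K}`, which therefore has
measure at least `m₀ / (4K)`.
-/

noncomputable section

open MeasureTheory Real

abbrev E3 : Type := EuclideanSpace ℝ (Fin 3)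

open Metric

/-- `t ↦ exp (t - 1)` is the Legendre transform of `a ↦ a log a`. -/
lemma mul_sub_exp_le_mul_log {a : ℝ} (t : ℝ) (ha : 0 ≤ a) : a * t - exp (t - 1) ≤ a * log a := by
  rcases ha.eq_or_lt with rfl | ha
  · simp [(exp_pos _).le]
  · have h := add_one_le_exp (t - 1 - log a)
    rw [exp_sub _ (log a), exp_log ha, le_div_iff₀ ha] at h
    linarith

lemma integrable_exp_neg_sq_norm {V : Type*} [NormedAddCommGroup V] [InnerProductSpace ℝ V]
    [FiniteDimensional ℝ V] [MeasurableSpace V] [BorelSpace V] :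
    Integrable (fun v : V => exp (-‖v‖ ^ 2)) := by
  have h := GaussianFourier.integrable_cexp_neg_mul_sq_norm_add (V := V) (b := 1) (by simp) 0 0
  refine h.norm.congr (Filter.Eventually.of_forall fun v => ?_)
  simp only [Complex.norm_exp, zero_mul, add_zero, neg_mul, one_mul]
  norm_cast

lemma sq_mul_setIntegral_compl_ball_le {E : Type*} [NormedAddCommGroup E] [MeasurableSpace E]
    [OpensMeasurableSpace E] {μ : Measure E} {f : E → ℝ} {R : ℝ} (hR : 0 ≤ R)
    (hf0 : ∀ v, 0 ≤ f v) (hfi : Integrable f μ) (hfe : Integrable (fun v => f v * ‖v‖ ^ 2) μ) :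
    R ^ 2 * ∫ v in (ball 0 R)ᶜ, f v ∂μ ≤ ∫ v, f v * ‖v‖ ^ 2 ∂μ := by
  rw [← integral_const_mul]
  calc ∫ v in (ball 0 R)ᶜ, R ^ 2 * f v ∂μ ≤ ∫ v in (ball 0 R)ᶜ, f v * ‖v‖ ^ 2 ∂μ := by
        refine setIntegral_mono_on (hfi.const_mul _).integrableOn hfe.integrableOn
          measurableSet_ball.compl fun v hv => ?_
        rw [Set.mem_compl_iff, mem_ball_zero_iff, not_lt] at hv
        rw [mul_comm]
        exact mul_le_mul_of_nonneg_left (pow_le_pow_left₀ hR hv 2) (hf0 v)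
    _ ≤ ∫ v, f v * ‖v‖ ^ 2 ∂μ :=
        setIntegral_le_integral hfe (ae_of_all _ fun v => mul_nonneg (hf0 v) (by positivity))

section Tails

variable {α : Type*} [MeasurableSpace α] {μ : Measure α} {f : α → ℝ}

lemma setIntegral_le_mul_measureReal {s : Set α} {c : ℝ} (hs : μ s < ⊤)
    (hf0 : ∀ x ∈ s, 0 ≤ f x) (hfc : ∀ x ∈ s, f x ≤ c) :
    ∫ x in s, f x ∂μ ≤ c * μ.real s :=
  (le_abs_self _).trans <| norm_setIntegral_le_of_norm_le_const hs fun x hx => by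
    rw [norm_of_nonneg (hf0 x hx)]
    exact hfc x hx

lemma neg_integral_mul_sub_integral_exp_le_setIntegral_mul_log {w : α → ℝ} (hw : ∀ x, 0 ≤ w x)
    (hf0 : ∀ x, 0 ≤ f x) (hfw : Integrable (fun x => f x * w x) μ)
    (hflog : Integrable (fun x => f x * log (f x)) μ) (hexp : Integrable (fun x => exp (-w x)) μ)
    {s : Set α} (hs : MeasurableSet s) :
    -(∫ x, f x * w x ∂μ) - ∫ x, exp (-w x) ∂μ ≤ ∫ x in s, f x * log (f x) ∂μ := by
  have hpointwise : ∀ x, -(f x * w x) - exp (-w x) ≤ f x * log (f x) := fun x => by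
    have h := mul_sub_exp_le_mul_log (1 - w x) (hf0 x)
    rw [show 1 - w x - 1 = -w x by ring] at h
    linarith [hf0 x]
  calc -(∫ x, f x * w x ∂μ) - ∫ x, exp (-w x) ∂μ
      ≤ -(∫ x in s, f x * w x ∂μ) - ∫ x in s, exp (-w x) ∂μ := by
        linarith [setIntegral_le_integral (s := s) hfw
            (ae_of_all _ fun x => mul_nonneg (hf0 x) (hw x)),
          setIntegral_le_integral (s := s) hexp (ae_of_all _ fun x => (exp_pos _).le)]
    _ = ∫ x in s, (-(f x * w x) - exp (-w x)) ∂μ := by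
        have hfw' : IntegrableOn (fun x => -(f x * w x)) s μ := hfw.neg.integrableOn
        rw [integral_sub hfw' hexp.integrableOn, integral_neg]
    _ ≤ ∫ x in s, f x * log (f x) ∂μ :=
        setIntegral_mono_on (hfw.neg.sub hexp).integrableOn hflog.integrableOn hs
          fun x _ => hpointwise x

lemma log_mul_setIntegral_superlevel_le {K : ℝ} (hK : 0 < K) {w : α → ℝ} (hw : ∀ x, 0 ≤ w x)
    (hfm : Measurable f) (hf0 : ∀ x, 0 ≤ f x) (hfi : Integrable f μ)
    (hfw : Integrable (fun x => f x * w x) μ) (hflog : Integrable (fun x => f x * log (f x)) μ)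
    (hexp : Integrable (fun x => exp (-w x)) μ) :
    log K * ∫ x in {x | K ≤ f x}, f x ∂μ ≤
      ∫ x, f x * log (f x) ∂μ + ∫ x, f x * w x ∂μ + ∫ x, exp (-w x) ∂μ := by
  have hT : MeasurableSet {x | K ≤ f x} := measurableSet_le measurable_const hfm
  have hlower := neg_integral_mul_sub_integral_exp_le_setIntegral_mul_log hw hf0 hfw hflog hexp
    hT.compl
  have hsplit := integral_add_compl hT hflog
  have hsuper : log K * ∫ x in {x | K ≤ f x}, f x ∂μ ≤
      ∫ x in {x | K ≤ f x}, f x * log (f x) ∂μ := by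
    rw [← integral_const_mul]
    refine setIntegral_mono_on (hfi.const_mul _).integrableOn hflog.integrableOn hT fun x hx => ?_
    rw [mul_comm]
    exact mul_le_mul_of_nonneg_left (log_le_log hK hx) (hf0 x)
  linarith

lemma div_le_measureReal_inter_superlevel {B : Set α} (hB : MeasurableSet B) (hBfin : μ B < ⊤)
    {m ℓ K : ℝ} (hℓ : 0 ≤ ℓ) (hK : 0 < K) (hfm : Measurable f) (hf0 : ∀ x, 0 ≤ f x)
    (hfi : Integrable f μ) (hmass : m ≤ ∫ x, f x ∂μ) (hout : ∫ x in Bᶜ, f x ∂μ ≤ m / 4)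
    (hhigh : ∫ x in {x | K ≤ f x}, f x ∂μ ≤ m / 4) (hlow : ℓ * μ.real B ≤ m / 4) :
    m / (4 * K) ≤ μ.real (B ∩ {x | ℓ ≤ f x}) := by
  set L := {x | ℓ ≤ f x}
  set T := {x | K ≤ f x}
  have hBL : μ (B ∩ L) < ⊤ := (measure_mono Set.inter_subset_left).trans_lt hBfin
  have hsplitB := integral_add_compl hB hfi
  have hsplitL := integral_inter_add_sdiff (measurableSet_le measurable_const hfm) hfi.integrableOn
    (s := B) (t := L)
  have hsplitT := integral_inter_add_sdiff (measurableSet_le measurable_const hfm) hfi.integrableOn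
    (s := B ∩ L) (t := T)
  have hbelow : ∫ x in B \ L, f x ∂μ ≤ ℓ * μ.real B :=
    (setIntegral_le_mul_measureReal ((measure_mono Set.sdiff_subset).trans_lt hBfin)
      (fun x _ => hf0 x) fun x hx => (not_le.1 hx.2).le).trans
      (mul_le_mul_of_nonneg_left (measureReal_mono Set.sdiff_subset hBfin.ne) hℓ)
  have habove : ∫ x in B ∩ L ∩ T, f x ∂μ ≤ ∫ x in T, f x ∂μ :=
    setIntegral_mono_set hfi.integrableOn (ae_of_all _ hf0) Set.inter_subset_right.eventuallyLE
  have hbetween : ∫ x in (B ∩ L) \ T, f x ∂μ ≤ K * μ.real (B ∩ L) :=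
    (setIntegral_le_mul_measureReal ((measure_mono Set.sdiff_subset).trans_lt hBL)
      (fun x _ => hf0 x) fun x hx => (not_le.1 hx.2).le).trans
      (mul_le_mul_of_nonneg_left (measureReal_mono Set.sdiff_subset hBL.ne) hK.le)
  rw [div_le_iff₀ (by positivity)]
  linarith

end Tails

theorem mass_on_bounded_set_general (m0 En H0 : ℝ) (hm0 : 0 < m0) :
    ∃ ℓ R μ : ℝ, 0 < ℓ ∧ 0 < R ∧ 0 < μ ∧
      ∀ f : E3 → ℝ, Measurable f → (∀ v, 0 ≤ f v) →
        Integrable f → Integrable (fun v => f v * ‖v‖ ^ 2) →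
        Integrable (fun v => f v * Real.log (f v)) →
        m0 ≤ (∫ v : E3, f v) →
        (∫ v : E3, f v * ‖v‖ ^ 2) ≤ En →
        (∫ v : E3, f v * Real.log (f v)) ≤ H0 →
        ENNReal.ofReal μ ≤ volume {v : E3 | ‖v‖ < R ∧ ℓ ≤ f v} := by
  set R : ℝ := max 1 (4 * En / m0)
  set ℓ : ℝ := m0 / (4 * (volume.real (ball (0 : E3) R) + 1))
  set C : ℝ := ∫ v : E3, exp (-‖v‖ ^ 2)
  set K : ℝ := exp (max 1 (4 * (H0 + En + C) / m0))
  refine ⟨ℓ, R, m0 / (4 * K), by positivity, by positivity, by positivity, ?_⟩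
  intro f hfm hf0 hfi hfe hflog hmass henergy hent
  have hout : ∫ v in (ball 0 R)ᶜ, f v ≤ m0 / 4 := by
    have hR1 : 1 ≤ R := le_max_left _ _
    have hR : 4 * En / m0 ≤ R ^ 2 := (le_max_right _ _).trans (le_self_pow₀ hR1 two_ne_zero)
    rw [div_le_iff₀ hm0] at hR
    refine le_of_mul_le_mul_left ?_ (by positivity : 0 < R ^ 2)
    linarith [sq_mul_setIntegral_compl_ball_le (μ := volume) (by linarith) hf0 hfi hfe]
  have hhigh : ∫ v in {v | K ≤ f v}, f v ≤ m0 / 4 := by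
    have hK : 4 * (H0 + En + C) / m0 ≤ log K := by simp only [K, log_exp, le_max_right]
    rw [div_le_iff₀ hm0] at hK
    refine le_of_mul_le_mul_left ?_ (by simp only [K, log_exp]; positivity : 0 < log K)
    linarith [log_mul_setIntegral_superlevel_le (K := K) (exp_pos _)
      (fun v : E3 => sq_nonneg ‖v‖) hfm hf0 hfi hfe hflog integrable_exp_neg_sq_norm]
  have hlow : ℓ * volume.real (ball (0 : E3) R) ≤ m0 / 4 := by
    rw [div_mul_eq_mul_div, div_le_div_iff₀ (by positivity) (by norm_num)]
    nlinarith [measureReal_nonneg (μ := volume) (s := ball (0 : E3) R)]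
  have hset : {v : E3 | ‖v‖ < R ∧ ℓ ≤ f v} = ball 0 R ∩ {v | ℓ ≤ f v} := by
    ext v
    simp
  rw [hset]
  exact ENNReal.ofReal_le_of_le_toReal <| div_le_measureReal_inter_superlevel measurableSet_ball
    measure_ball_lt_top (by positivity) (exp_pos _) hfm hf0 hfi hmass hout hhigh hlow

/-- For all `m₀, E > 0` and `H₀ ∈ ℝ` there exist `ℓ, R, μ > 0`, depending only on
`m₀, E, H₀`, such that any nonnegative `f` with mass at least `m₀`, energy at most `E`
and entropy at most `H₀` satisfies `|{v ∈ B_R : f(v) ≥ ℓ}| ≥ μ`. -/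
theorem mass_on_bounded_set (m0 En H0 : ℝ) (hm0 : 0 < m0) (hE : 0 < En) :
    ∃ ℓ R μ : ℝ, 0 < ℓ ∧ 0 < R ∧ 0 < μ ∧
      ∀ f : E3 → ℝ, Measurable f → (∀ v, 0 ≤ f v) →
        Integrable f → Integrable (fun v => f v * ‖v‖ ^ 2) →
        Integrable (fun v => f v * Real.log (f v)) →
        m0 ≤ (∫ v : E3, f v) →
        (∫ v : E3, f v * ‖v‖ ^ 2) ≤ En →
        (∫ v : E3, f v * Real.log (f v)) ≤ H0 →
        ENNReal.ofReal μ ≤ volume {v : E3 | ‖v‖ < R ∧ ℓ ≤ f v} :=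
  mass_on_bounded_set_general m0 En H0 hm0
end
end

section
/- Let $C > 0$, $t_0 \in \mathbb{R}$, $T > t_0$, and let $Y : [t_0, T] \to (0,\infty)$ be differentiable with $Y'(\sigma) \le C\,(Y(\sigma) + Y(\sigma)^3)$ for all $\sigma \in [t_0,T]$. Then for every $\sigma \in [t_0,T]$ such that $e^{-2C(\sigma - t_0)}\big(Y(t_0)^{-2} + 1\big) > 1$, one has $Y(\sigma)^2 \le \Big[e^{-2C(\sigma - t_0)}\big(Y(t_0)^{-2} + 1\big) - 1\Big]^{-1}$. In particular, if $\sigma - t_0 \le (2C)^{-1}\ln\big(1 + \frac{1}{1 + 2 Y(t_0)^2}\big)$, then $Y(\sigma) \le \sqrt{2}\, Y(t_0)$. -/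
/-!
With `u = Y⁻² + 1`, the differential inequality `Y' ≤ C (Y + Y³)` becomes `u' ≥ -2C u`, so
`e^{2C(σ - t₀)} u(σ)` is nondecreasing and `Y(σ)⁻² + 1 ≥ e^{-2C(σ - t₀)} (Y(t₀)⁻² + 1)`. Solving for
`Y(σ)²` gives the first bound; under the logarithmic bound on `σ - t₀` the right-hand side minus one
is at least `(2 Y(t₀)²)⁻¹`, which gives the second.
-/

open Real Set

theorem exp_neg_mul_le_of_neg_mul_le_deriv {f f' : ℝ → ℝ} {k a b : ℝ}
    (hf : ContinuousOn f (Icc a b)) (hf' : ∀ x ∈ Ioo a b, HasDerivAt f (f' x) x)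
    (hbound : ∀ x ∈ Ioo a b, -k * f x ≤ f' x) {x : ℝ} (hx : x ∈ Icc a b) :
    exp (-k * (x - a)) * f a ≤ f x := by
  set g : ℝ → ℝ := fun x => exp (k * (x - a)) * f x
  have hg' : ∀ x ∈ Ioo a b, HasDerivAt g (exp (k * (x - a)) * (k * f x + f' x)) x := fun x hx =>
    ((((hasDerivAt_id x).sub_const a).const_mul k).exp.fun_mul (hf' x hx)).congr_deriv
      (by simp only [id]; ring)
  have hmono : MonotoneOn g (Icc a b) := by
    refine monotoneOn_of_deriv_nonneg (convex_Icc a b) ?_ ?_ ?_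
    · exact ((continuous_exp.comp (continuous_const.mul
        (continuous_id.sub continuous_const))).continuousOn).mul hf
    · rw [interior_Icc]
      exact fun x hx => (hg' x hx).differentiableAt.differentiableWithinAt
    · rw [interior_Icc]
      intro x hx
      rw [(hg' x hx).deriv]
      exact mul_nonneg (exp_pos _).le (by linarith [hbound x hx])
  have hga : g a ≤ g x := hmono (left_mem_Icc.2 (hx.1.trans hx.2)) hx hx.1
  calc exp (-k * (x - a)) * f a = exp (-k * (x - a)) * g a := by simp [g]
    _ ≤ exp (-k * (x - a)) * g x := mul_le_mul_of_nonneg_left hga (exp_pos _).le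
    _ = f x := by rw [← mul_assoc, ← exp_add, neg_mul, neg_add_cancel, exp_zero, one_mul]

theorem hasDerivAt_one_div_sq_add_one {Y : ℝ → ℝ} {Y' x : ℝ} (hY : HasDerivAt Y Y' x)
    (hx : Y x ≠ 0) :
    HasDerivAt (fun x => 1 / Y x ^ 2 + 1) (-2 * Y' / Y x ^ 3) x := by
  refine (((hasDerivAt_const x 1).fun_div (hY.fun_pow 2) (pow_ne_zero 2 hx)).add_const
    1).congr_deriv ?_
  field_simp
  ring

theorem exp_mul_one_div_sq_add_one_le {Y : ℝ → ℝ} {C a b : ℝ}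
    (hpos : ∀ x ∈ Icc a b, 0 < Y x) (hcont : ContinuousOn Y (Icc a b))
    (hdiff : ∀ x ∈ Ioo a b, DifferentiableAt ℝ Y x)
    (hineq : ∀ x ∈ Ioo a b, deriv Y x ≤ C * (Y x + Y x ^ 3)) {x : ℝ} (hx : x ∈ Icc a b) :
    exp (-2 * C * (x - a)) * (1 / Y a ^ 2 + 1) ≤ 1 / Y x ^ 2 + 1 := by
  have hu : ContinuousOn (fun x => 1 / Y x ^ 2 + 1) (Icc a b) :=
    (continuousOn_const.div (hcont.pow 2) fun x hx => (pow_pos (hpos x hx) 2).ne').add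
      continuousOn_const
  refine neg_mul 2 C ▸ exp_neg_mul_le_of_neg_mul_le_deriv hu
    (fun x hx => hasDerivAt_one_div_sq_add_one (hdiff x hx).hasDerivAt
      (hpos x (Ioo_subset_Icc_self hx)).ne') (fun x hx => ?_) hx
  have hY := hpos x (Ioo_subset_Icc_self hx)
  have hlhs : -(2 * C) * (1 / Y x ^ 2 + 1) = -2 * (C * (Y x + Y x ^ 3)) / Y x ^ 3 := by
    field_simp
  rw [hlhs]
  exact div_le_div_of_nonneg_right (by linarith [hineq x hx]) (pow_pos hY 3).le

theorem inv_two_mul_le_exp_neg_mul_one_div_add_one_sub_one {s x : ℝ} (hs : 0 < s)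
    (hx : x ≤ log (1 + 1 / (1 + 2 * s))) :
    (2 * s)⁻¹ ≤ exp (-x) * (1 / s + 1) - 1 := by
  have hlog : exp x ≤ 1 + 1 / (1 + 2 * s) := by
    rwa [← exp_le_exp, exp_log (by positivity)] at hx
  have hexp : (1 + 2 * s) / (2 + 2 * s) ≤ exp (-x) := by
    rw [exp_neg, le_inv_comm₀ (by positivity) (exp_pos x)]
    refine hlog.trans_eq ?_
    rw [inv_div]
    field_simp
    ring
  calc (2 * s)⁻¹ = (1 + 2 * s) / (2 + 2 * s) * (1 / s + 1) - 1 := by field_simp; ring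
    _ ≤ exp (-x) * (1 / s + 1) - 1 := by gcongr

theorem ode_comparison_general (C t0 T : ℝ) (hC : 0 < C) (Y : ℝ → ℝ)
    (hpos : ∀ σ ∈ Set.Icc t0 T, 0 < Y σ)
    (hdiff : ∀ σ ∈ Set.Icc t0 T, DifferentiableAt ℝ Y σ)
    (hineq : ∀ σ ∈ Set.Icc t0 T, deriv Y σ ≤ C * (Y σ + Y σ ^ 3)) :
    (∀ σ ∈ Set.Icc t0 T,
        1 < Real.exp (-2 * C * (σ - t0)) * (1 / Y t0 ^ 2 + 1) →
        Y σ ^ 2 ≤ (Real.exp (-2 * C * (σ - t0)) * (1 / Y t0 ^ 2 + 1) - 1)⁻¹) ∧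
    (∀ σ ∈ Set.Icc t0 T,
        σ - t0 ≤ (2 * C)⁻¹ * Real.log (1 + 1 / (1 + 2 * Y t0 ^ 2)) →
        Y σ ≤ Real.sqrt 2 * Y t0) := by
  have hlower : ∀ σ ∈ Icc t0 T, exp (-2 * C * (σ - t0)) * (1 / Y t0 ^ 2 + 1) - 1 ≤ 1 / Y σ ^ 2 :=
    fun σ hσ => sub_le_iff_le_add.2 <| exp_mul_one_div_sq_add_one_le hpos
      (fun x hx => (hdiff x hx).continuousAt.continuousWithinAt)
      (fun x hx => hdiff x (Ioo_subset_Icc_self hx))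
      (fun x hx => hineq x (Ioo_subset_Icc_self hx)) hσ
  have part1 : ∀ σ ∈ Icc t0 T, 1 < exp (-2 * C * (σ - t0)) * (1 / Y t0 ^ 2 + 1) →
      Y σ ^ 2 ≤ (exp (-2 * C * (σ - t0)) * (1 / Y t0 ^ 2 + 1) - 1)⁻¹ := fun σ hσ h1 => by
    simpa using inv_anti₀ (sub_pos.2 h1) (hlower σ hσ)
  refine ⟨part1, fun σ hσ hsmall => ?_⟩
  have hY0 : 0 < Y t0 := hpos t0 (left_mem_Icc.2 (hσ.1.trans hσ.2))
  have hgap : (2 * Y t0 ^ 2)⁻¹ ≤ exp (-2 * C * (σ - t0)) * (1 / Y t0 ^ 2 + 1) - 1 := by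
    convert inv_two_mul_le_exp_neg_mul_one_div_add_one_sub_one (pow_pos hY0 2)
      ((le_inv_mul_iff₀ (by positivity)).1 hsmall) using 4
    ring
  have hsq : Y σ ^ 2 ≤ 2 * Y t0 ^ 2 := by
    simpa using (part1 σ hσ (by linarith [inv_pos.2 (by positivity : 0 < 2 * Y t0 ^ 2)])).trans
      (inv_anti₀ (by positivity) hgap)
  rwa [← sqrt_sq hY0.le, ← sqrt_mul zero_le_two, le_sqrt (hpos σ hσ).le (by positivity)]

/-- ODE comparison lemma: if `Y > 0` is differentiable on `[t₀,T]` and satisfies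
`Y' ≤ C (Y + Y³)`, then as long as `e^{-2C(σ-t₀)}(Y(t₀)⁻² + 1) > 1` one has
`Y(σ)² ≤ (e^{-2C(σ-t₀)}(Y(t₀)⁻² + 1) - 1)⁻¹`; in particular, if
`σ - t₀ ≤ (2C)⁻¹ ln(1 + 1/(1 + 2 Y(t₀)²))` then `Y(σ) ≤ √2 Y(t₀)`. -/
theorem ode_comparison (C t0 T : ℝ) (hC : 0 < C) (hT : t0 < T) (Y : ℝ → ℝ)
    (hpos : ∀ σ ∈ Set.Icc t0 T, 0 < Y σ)
    (hdiff : ∀ σ ∈ Set.Icc t0 T, DifferentiableAt ℝ Y σ)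
    (hineq : ∀ σ ∈ Set.Icc t0 T, deriv Y σ ≤ C * (Y σ + Y σ ^ 3)) :
    (∀ σ ∈ Set.Icc t0 T,
        1 < Real.exp (-2 * C * (σ - t0)) * (1 / Y t0 ^ 2 + 1) →
        Y σ ^ 2 ≤ (Real.exp (-2 * C * (σ - t0)) * (1 / Y t0 ^ 2 + 1) - 1)⁻¹) ∧
    (∀ σ ∈ Set.Icc t0 T,
        σ - t0 ≤ (2 * C)⁻¹ * Real.log (1 + 1 / (1 + 2 * Y t0 ^ 2)) →
        Y σ ≤ Real.sqrt 2 * Y t0) :=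
  ode_comparison_general C t0 T hC Y hpos hdiff hineq
end
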